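/- arXiv:2003.00551 — 5 statements merged into one kernel-verified Lean document; each statement's English description precedes it below -/
import Mathlib

section
/- If z ∈ ℝ×{0} and F_{α,β}^n(z) ∈ ℝ×{k/2} for some integers k, n, then F_{α,β}^{2n}(z) = z + (0,k). -/
noncomputable def Fab (α β : ℝ) (z : ℝ × ℝ) : ℝ × ℝ :=
  (z.1 + α * Real.sin (2 * Real.pi * (z.2 + β * Real.sin (2 * Real.pi * z.1))),
   z.2 + β * Real.sin (2 * Real.pi * z.1))

noncomputable def Gab (α : ℝ) (p : ℝ × ℝ) : ℝ × ℝ :=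
  (p.1 - α * Real.sin (2 * Real.pi * p.2), -p.2)

lemma FGF (α β : ℝ) (p : ℝ × ℝ) :
    Fab α β (Gab α (Fab α β p)) = Gab α p := by
  obtain ⟨x, y⟩ := p
  simp only [Fab, Gab, Prod.mk.injEq]
  constructor
  · have h1 : x + α * Real.sin (2 * Real.pi * (y + β * Real.sin (2 * Real.pi * x))) -
        α * Real.sin (2 * Real.pi * (y + β * Real.sin (2 * Real.pi * x))) = x := by ring
    rw [h1]
    have h2 : 2 * Real.pi * (-(y + β * Real.sin (2 * Real.pi * x)) +
        β * Real.sin (2 * Real.pi * x)) = -(2 * Real.pi * y) := by ring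
    rw [h2, Real.sin_neg]
    ring
  · have h1 : x + α * Real.sin (2 * Real.pi * (y + β * Real.sin (2 * Real.pi * x))) -
        α * Real.sin (2 * Real.pi * (y + β * Real.sin (2 * Real.pi * x))) = x := by ring
    rw [h1]
    ring

lemma FGF_iter (α β : ℝ) (n : ℕ) (p : ℝ × ℝ) :
    (Fab α β)^[n] (Gab α ((Fab α β)^[n] p)) = Gab α p := by
  induction n generalizing p with
  | zero => simp
  | succ m ih =>
    rw [Function.iterate_succ_apply, Function.iterate_succ_apply']
    rw [FGF, ih]

lemma Fab_sub (α β : ℝ) (p : ℝ × ℝ) (k : ℤ) :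
    Fab α β (p - ((0 : ℝ), (k : ℝ))) = Fab α β p - ((0 : ℝ), (k : ℝ)) := by
  obtain ⟨x, y⟩ := p
  simp only [Fab, Prod.mk_sub_mk, sub_zero, Prod.mk.injEq]
  have h : 2 * Real.pi * (y - (k : ℝ) + β * Real.sin (2 * Real.pi * x)) =
      2 * Real.pi * (y + β * Real.sin (2 * Real.pi * x)) + (-k : ℤ) * (2 * Real.pi) := by
    push_cast; ring
  rw [h, Real.sin_add_int_mul_two_pi]
  constructor <;> ring

lemma Fab_iter_sub (α β : ℝ) (n : ℕ) (p : ℝ × ℝ) (k : ℤ) :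
    (Fab α β)^[n] (p - ((0 : ℝ), (k : ℝ))) = (Fab α β)^[n] p - ((0 : ℝ), (k : ℝ)) := by
  induction n generalizing p with
  | zero => simp
  | succ m ih => rw [Function.iterate_succ_apply, Function.iterate_succ_apply, Fab_sub, ih]

/-- If `z` lies on the horizontal line `ℝ × {0}` and `F_{α,β}ⁿ(z)` lies on `ℝ × {k/2}` for some
integer `k`, then `F_{α,β}^{2n}(z) = z + (0,k)`. -/
theorem stmt5 (α β : ℝ) (z : ℝ × ℝ) (hz : z.2 = 0) (n : ℕ) (k : ℤ)
    (h : ((Fab α β)^[n] z).2 = (k : ℝ) / 2) :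
    (Fab α β)^[2 * n] z = z + ((0 : ℝ), (k : ℝ)) := by
  set w := (Fab α β)^[n] z with hw
  have hGz : Gab α z = z := by
    obtain ⟨x, y⟩ := z
    simp only at hz
    subst hz
    simp [Gab]
  have hGw : Gab α w = w - ((0 : ℝ), (k : ℝ)) := by
    have hs : Real.sin (2 * Real.pi * w.2) = 0 := by
      rw [h]
      have : 2 * Real.pi * ((k : ℝ) / 2) = (k : ℤ) * Real.pi := by push_cast; ring
      rw [this, Real.sin_int_mul_pi]
    have : Gab α w = (w.1, -w.2) := by simp [Gab, hs]
    rw [this]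
    ext
    · simp
    · simp only [Prod.snd_sub, this, h]; ring
  have key := FGF_iter α β n z
  rw [← hw, hGw, hGz, Fab_iter_sub] at key
  have h2n : (Fab α β)^[2 * n] z = (Fab α β)^[n] w := by
    rw [hw, ← Function.iterate_add_apply, two_mul]
  rw [h2n]
  have := sub_eq_iff_eq_add.mp key
  rw [this]
end

section
/- If α ≥ 1/2, then there exists y ∈ [0,1] with sin(2πy) = 1/(2α), and for any such y, F_{α,β}(0,y) = (1/2, y) and F_{α,β}²(0,y) = (1,y). Hence the point (0,y) has rotation vector (1/2, 0) under F_{α,β}. -/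
open Filter

lemma Fab_half_step (α β y : ℝ) (hα : (0:ℝ) < α)
    (hy : Real.sin (2 * Real.pi * y) = 1 / (2 * α)) (n : ℕ) :
    Fab α β (((n:ℝ)/2), y) = (((n:ℝ)+1)/2, y) := by
  have hs : Real.sin (2 * Real.pi * ((n:ℝ)/2)) = 0 := by
    have : 2 * Real.pi * ((n:ℝ)/2) = (n:ℝ) * Real.pi := by ring
    rw [this, Real.sin_nat_mul_pi]
  simp only [Fab, hs, mul_zero, add_zero, hy]
  have : (↑n:ℝ) / 2 + α * (1 / (2 * α)) = ((n:ℝ) + 1) / 2 := by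
    field_simp
  rw [this]

lemma Fab_iter (α β y : ℝ) (hα : (0:ℝ) < α)
    (hy : Real.sin (2 * Real.pi * y) = 1 / (2 * α)) (m : ℕ) :
    (Fab α β)^[m] ((0:ℝ), y) = (((m:ℝ)/2), y) := by
  induction m with
  | zero => simp
  | succ k ih =>
      rw [Function.iterate_succ_apply', ih, Fab_half_step α β y hα hy k]
      push_cast
      ring_nf

/-- If `α ≥ 1/2` then there is `y ∈ [0,1]` with `sin(2πy) = 1/(2α)`, and for any such `y`,
`F_{α,β}(0,y) = (1/2, y)` and `F_{α,β}²(0,y) = (1,y)`; hence `(0,y)` has rotation vector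
`(1/2, 0)`. -/
theorem stmt10 (α β : ℝ) (hα : 1/2 ≤ α) :
    (∃ y ∈ Set.Icc (0:ℝ) 1, Real.sin (2 * Real.pi * y) = 1 / (2 * α)) ∧
    (∀ y : ℝ, Real.sin (2 * Real.pi * y) = 1 / (2 * α) →
      Fab α β ((0:ℝ), y) = ((1/2 : ℝ), y) ∧
      (Fab α β)^[2] ((0:ℝ), y) = ((1:ℝ), y) ∧
      Tendsto (fun m : ℕ => ((m : ℝ))⁻¹ • ((Fab α β)^[m] ((0:ℝ), y) - ((0:ℝ), y)))
        atTop (nhds ((1/2 : ℝ), (0:ℝ)))) := by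
  have hα0 : (0:ℝ) < α := lt_of_lt_of_le (by norm_num) hα
  constructor
  · -- existence via IVT on [0, 1/4]
    have hcont : ContinuousOn (fun t : ℝ => Real.sin (2 * Real.pi * t)) (Set.Icc 0 (1/4)) :=
      (Real.continuous_sin.comp (continuous_const.mul continuous_id)).continuousOn
    have h0 : Real.sin (2 * Real.pi * 0) = 0 := by simp
    have h1 : Real.sin (2 * Real.pi * (1/4)) = 1 := by
      have : 2 * Real.pi * (1/4) = Real.pi / 2 := by ring
      rw [this, Real.sin_pi_div_two]
    have hmem : 1 / (2 * α) ∈ Set.Icc (Real.sin (2 * Real.pi * 0))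
        (Real.sin (2 * Real.pi * (1/4))) := by
      rw [h0, h1]
      constructor
      · positivity
      · rw [div_le_one (by linarith)]; linarith
    obtain ⟨y, hy, hsy⟩ := intermediate_value_Icc (by norm_num : (0:ℝ) ≤ 1/4) hcont hmem
    exact ⟨y, ⟨hy.1, le_trans hy.2 (by norm_num)⟩, hsy⟩
  · intro y hy
    have hiter := Fab_iter α β y hα0 hy
    refine ⟨?_, ?_, ?_⟩
    · have := hiter 1; simpa using this
    · have := hiter 2; simpa using this
    · have heq : ∀ᶠ m : ℕ in atTop,
        ((m : ℝ))⁻¹ • ((Fab α β)^[m] ((0:ℝ), y) - ((0:ℝ), y)) = ((1/2 : ℝ), (0:ℝ)) := by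
        filter_upwards [eventually_gt_atTop 0] with m hm
        have hm' : (m:ℝ) ≠ 0 := Nat.cast_ne_zero.mpr hm.ne'
        rw [hiter m]
        simp only [Prod.smul_mk, Prod.mk_sub_mk, smul_eq_mul, Prod.sub_def]
        apply Prod.ext <;> simp <;> field_simp
      exact Tendsto.congr' (heq.mono fun m h => h.symm) tendsto_const_nhds
end

section
/- Let F : ℝ² → ℝ² be a lift of a torus homeomorphism homotopic to the identity (i.e. F - id is ℤ²-periodic). Suppose v ∈ ℝ²∖{0}, u ∈ ℤ², c ∈ ℝ are such that ⟨F(z)-z, v⟩ ≤ ⟨u, v⟩ for all z with ⟨z, v⟩ = c. Then F(H₀) ⊆ H₀ + u, where H₀ = {z : ⟨z,v⟩ ≤ c}, and consequently for all n ≥ 1 and z ∈ H₀, ⟨F^n(z)-z, v⟩ ≤ n⟨u,v⟩ + (c - ⟨z,v⟩). -/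
/-- Half-plane confinement: if `F` is a lift of a torus homeomorphism homotopic to the identity
and `⟨F(z)-z, v⟩ ≤ ⟨u, v⟩` on the line `⟨z, v⟩ = c`, then `F(H₀) ⊆ H₀ + u` for the half-plane
`H₀ = {⟨z,v⟩ ≤ c}`, and hence `⟨Fⁿ(z)-z, v⟩ ≤ n⟨u,v⟩ + (c - ⟨z,v⟩)` for `z ∈ H₀`, `n ≥ 1`. -/
theorem stmt11 (F : ℝ × ℝ → ℝ × ℝ) (hF : IsHomeomorph F)
    (hper : ∀ (z : ℝ × ℝ) (m : ℤ × ℤ), F (z + ((m.1 : ℝ), (m.2 : ℝ))) = F z + ((m.1 : ℝ), (m.2 : ℝ)))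
    (v : ℝ × ℝ) (hv : v ≠ 0) (u : ℤ × ℤ) (c : ℝ)
    (hline : ∀ z : ℝ × ℝ, z.1 * v.1 + z.2 * v.2 = c →
      (F z - z).1 * v.1 + (F z - z).2 * v.2 ≤ (u.1 : ℝ) * v.1 + (u.2 : ℝ) * v.2) :
    (∀ z : ℝ × ℝ, z.1 * v.1 + z.2 * v.2 ≤ c →
      (F z).1 * v.1 + (F z).2 * v.2 ≤ c + ((u.1 : ℝ) * v.1 + (u.2 : ℝ) * v.2)) ∧
    (∀ n : ℕ, 1 ≤ n → ∀ z : ℝ × ℝ, z.1 * v.1 + z.2 * v.2 ≤ c →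
      (F^[n] z - z).1 * v.1 + (F^[n] z - z).2 * v.2
        ≤ n * ((u.1 : ℝ) * v.1 + (u.2 : ℝ) * v.2) + (c - (z.1 * v.1 + z.2 * v.2))) := by
  obtain ⟨e, rfl⟩ := isHomeomorph_iff_exists_homeomorph.mp hF
  set g : ℝ × ℝ → ℝ := fun z => z.1 * v.1 + z.2 * v.2 with hg
  set a : ℝ := (u.1 : ℝ) * v.1 + (u.2 : ℝ) * v.2 with ha
  -- the line hypothesis reformulated
  have hline' : ∀ z : ℝ × ℝ, g z = c → g (e z) ≤ c + a := by
    intro z hz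
    have := hline z hz
    simp only [Prod.fst_sub, Prod.snd_sub] at this
    simp only [hg, ha] at *
    linarith
  -- choose an integer vector m with positive pairing with v
  have hm : ∃ m : ℤ × ℤ, 0 < (m.1 : ℝ) * v.1 + (m.2 : ℝ) * v.2 := by
    rcases lt_trichotomy v.1 0 with h1 | h1 | h1
    · exact ⟨(-1, 0), by simp; linarith⟩
    · rcases lt_trichotomy v.2 0 with h2 | h2 | h2
      · exact ⟨(0, -1), by simp; linarith⟩
      · exact absurd (Prod.ext h1 h2) hv
      · exact ⟨(0, 1), by simp; linarith⟩
    · exact ⟨(1, 0), by simp; linarith⟩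
  obtain ⟨m, hδ⟩ := hm
  set δ : ℝ := (m.1 : ℝ) * v.1 + (m.2 : ℝ) * v.2 with hδdef
  -- the key half-plane confinement
  have key : ∀ z : ℝ × ℝ, g z ≤ c → g (e z) ≤ c + a := by
    intro z0 hz0
    rcases eq_or_lt_of_le hz0 with h | h
    · exact hline' z0 h
    by_contra hcon
    push_neg at hcon
    set U : Set (ℝ × ℝ) := {z | g z < c} with hU
    set H : Set (ℝ × ℝ) := {z | g z ≤ c} with hH
    set P : Set (ℝ × ℝ) := {w | c + a < g w} with hP
    have hgcont : Continuous g := by fun_prop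
    have hUopen : IsOpen U := isOpen_lt hgcont continuous_const
    have hHclosed : IsClosed H := isClosed_le hgcont continuous_const
    have hlin : IsLinearMap ℝ g := by
      constructor
      · intro x y; simp only [hg, Prod.fst_add, Prod.snd_add]; ring
      · intro s x; simp only [hg, Prod.smul_fst, Prod.smul_snd, smul_eq_mul]; ring
    have hPconv : Convex ℝ P := convex_halfSpace_gt hlin (c + a)
    have hopen1 : IsOpen ((e : ℝ × ℝ → ℝ × ℝ) '' U) := e.isOpenMap U hUopen
    have hopen2 : IsOpen (((e : ℝ × ℝ → ℝ × ℝ) '' H)ᶜ) :=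
      (e.isClosedMap H hHclosed).isOpen_compl
    have hdisj : Disjoint ((e : ℝ × ℝ → ℝ × ℝ) '' U) (((e : ℝ × ℝ → ℝ × ℝ) '' H)ᶜ) := by
      apply Set.disjoint_left.mpr
      intro w hw hw2
      obtain ⟨z, hz, rfl⟩ := hw
      have hz' : g z < c := hz
      exact hw2 ⟨z, le_of_lt hz', rfl⟩
    have hsub : P ⊆ ((e : ℝ × ℝ → ℝ × ℝ) '' U) ∪ (((e : ℝ × ℝ → ℝ × ℝ) '' H)ᶜ) := by
      intro w hw
      by_cases hwH : w ∈ (e : ℝ × ℝ → ℝ × ℝ) '' H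
      · left
        obtain ⟨z, hz, rfl⟩ := hwH
        have hz' : g z ≤ c := hz
        refine ⟨z, ?_, rfl⟩
        rcases eq_or_lt_of_le hz' with h' | h'
        · exact absurd (hline' z h') (not_le.mpr hw)
        · exact h'
      · right; exact hwH
    have hne : (P ∩ ((e : ℝ × ℝ → ℝ × ℝ) '' U)).Nonempty :=
      ⟨e z0, hcon, ⟨z0, h, rfl⟩⟩
    have hPU : P ⊆ (e : ℝ × ℝ → ℝ × ℝ) '' U :=
      hPconv.isPreconnected.subset_left_of_subset_union hopen1 hopen2 hdisj hsub hne
    -- iterate translation to get a contradiction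
    have hiter : ∀ n : ℕ, g z0 + n * δ < c := by
      intro n
      have hwP : e z0 + (((((n : ℤ) * m.1 : ℤ)) : ℝ), ((((n : ℤ) * m.2 : ℤ)) : ℝ)) ∈ P := by
        have : g (e z0 + (((((n : ℤ) * m.1 : ℤ)) : ℝ), ((((n : ℤ) * m.2 : ℤ)) : ℝ)))
            = g (e z0) + n * δ := by
          simp only [hg, hδdef, Prod.fst_add, Prod.snd_add]
          push_cast
          ring
        have hn0 : (0 : ℝ) ≤ n * δ := by positivity
        simp only [hP, Set.mem_setOf_eq, this]
        linarith
      obtain ⟨y, hy, hey⟩ := hPU hwP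
      have htr := hper z0 ((n : ℤ) * m.1, (n : ℤ) * m.2)
      have hyz : y = z0 + (((((n : ℤ) * m.1 : ℤ)) : ℝ), ((((n : ℤ) * m.2 : ℤ)) : ℝ)) :=
        e.injective (by rw [hey, htr])
      have : g y = g z0 + n * δ := by
        rw [hyz]
        simp only [hg, hδdef, Prod.fst_add, Prod.snd_add]
        push_cast
        ring
      have hy' : g y < c := hy
      rw [this] at hy'
      exact hy'
    obtain ⟨n, hn⟩ := exists_nat_gt ((c - g z0) / δ)
    have h1 := hiter n
    have h2 : (c - g z0) < n * δ := by
      rw [div_lt_iff₀ hδ] at hn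
      linarith
    linarith
  -- second part: iterates
  have h2 : ∀ n : ℕ, ∀ z : ℝ × ℝ, g z ≤ c → g ((e : ℝ × ℝ → ℝ × ℝ)^[n] z) ≤ c + n * a := by
    intro n
    induction n with
    | zero => intro z hz; simpa using hz
    | succ n ih =>
      intro z hz
      have hw := ih z hz
      set w := (e : ℝ × ℝ → ℝ × ℝ)^[n] z with hwdef
      set z' : ℝ × ℝ := w + ((((-((n : ℤ) * u.1)) : ℤ) : ℝ), (((-((n : ℤ) * u.2)) : ℤ) : ℝ)) with hz'
      have hgz' : g z' = g w - n * a := by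
        simp only [hg, ha, hz', Prod.fst_add, Prod.snd_add]
        push_cast
        ring
      have hz'le : g z' ≤ c := by rw [hgz']; linarith
      have hkey := key z' hz'le
      have htr := hper w (-((n : ℤ) * u.1), -((n : ℤ) * u.2))
      have hge : g (e z') = g (e w) - n * a := by
        rw [hz', htr]
        simp only [hg, ha, Prod.fst_add, Prod.snd_add]
        push_cast
        ring
      have : g (e w) ≤ c + a + n * a := by rw [hge] at hkey; linarith
      rw [Function.iterate_succ_apply']
      push_cast
      linarith
  constructor
  · intro z hz
    exact key z hz
  · intro n hn z hz
    have := h2 n z hz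
    simp only [Prod.fst_sub, Prod.snd_sub]
    simp only [hg, ha] at *
    linarith
end

section
/- For every δ with 0 < δ < 1/2, the minimal variation of s(x) = sin(2πx) over intervals of length δ satisfies Var_s(δ) := min over t of (max of s on [t,t+δ] minus min of s on [t,t+δ]) ≥ π·δ². -/
/-!
For `b = a + δ/2` with midpoint `m`, `sin 2πb - sin 2πa = 2 sin(πδ/2) cos 2πm`. The midpoint ranges
over an interval of length `δ/2`, so it can be taken within `1/4 - δ/4` of a half-integer, where
`|cos 2πm| ≥ sin(πδ/2)`. Hence the oscillation is at least `2 sin²(πδ/2)`; concavity of `sin` on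
`[0, π/4]` gives `sin(πδ/2) ≥ √2 δ`, and `2 · 2δ² ≥ πδ²`.
-/

open Real Set

lemma abs_sub_le_csSup_sub_csInf {s : Set ℝ} (hs : Bornology.IsBounded s) {a b : ℝ}
    (ha : a ∈ s) (hb : b ∈ s) : |a - b| ≤ sSup s - sInf s := by
  rw [← Real.diam_eq hs, ← Real.dist_eq]
  exact Metric.dist_le_diam_of_mem hs ha hb

lemma mul_sin_le_sin_mul {x y : ℝ} (hx₀ : 0 ≤ x) (hx₁ : x ≤ 1) (hy₀ : 0 ≤ y) (hy : y ≤ π) :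
    x * sin y ≤ sin (x * y) := by
  simpa using strictConcaveOn_sin_Icc.concaveOn.2 ⟨le_rfl, pi_pos.le⟩ ⟨hy₀, hy⟩
    (sub_nonneg.2 hx₁) hx₀ (by ring)

lemma pi_mul_sq_le_two_mul_sin_sq {δ : ℝ} (h₀ : 0 ≤ δ) (h₁ : δ ≤ 1 / 2) :
    π * δ ^ 2 ≤ 2 * sin (π * δ / 2) ^ 2 := by
  have hsin : √2 * δ ≤ sin (π * δ / 2) := by
    have := mul_sin_le_sin_mul (x := 2 * δ) (y := π / 4) (by linarith) (by linarith)
      (by positivity) (by linarith [pi_pos])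
    rw [sin_pi_div_four] at this
    convert this using 1 <;> ring_nf
  have hsq : 2 * (√2 * δ) ^ 2 = 4 * δ ^ 2 := by
    rw [mul_pow, sq_sqrt zero_le_two]; ring
  nlinarith [pi_le_four, sq_nonneg δ, pow_le_pow_left₀ (by positivity) hsin 2]

lemma exists_mem_Icc_abs_sub_half_int_le (c : ℝ) {L : ℝ} (h₀ : 0 ≤ L) (h₁ : L ≤ 1 / 2) :
    ∃ m ∈ Icc c (c + L), ∃ k : ℤ, |m - k / 2| ≤ 1 / 4 - L / 2 := by
  -- `k / 2` is the half-integer nearest the midpoint `c + L / 2`; `m` is its projection onto the interval.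
  set k := round (2 * c + L)
  have hk : |2 * c + L - k| ≤ 1 / 2 := abs_sub_round _
  rw [abs_le] at hk
  refine ⟨max c (min (c + L) (k / 2)), ⟨le_max_left _ _, max_le (by linarith) (min_le_left _ _)⟩,
    k, abs_le.2 ?_⟩
  rcases min_cases (c + L) ((k : ℝ) / 2) with ⟨h, _⟩ | ⟨h, _⟩ <;> rw [h] <;>
    rcases max_cases c _ with ⟨h', _⟩ | ⟨h', _⟩ <;> rw [h'] <;> constructor <;> linarith

lemma sin_pi_mul_le_abs_cos_two_pi_mul {L m : ℝ} {k : ℤ} (hL : 0 ≤ L)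
    (hm : |m - k / 2| ≤ 1 / 4 - L / 2) : sin (π * L) ≤ |cos (2 * π * m)| := by
  have hshift : 2 * π * m = 2 * π * (m - k / 2) + k * π := by ring
  have hu : |2 * π * (m - k / 2)| ≤ π / 2 - π * L := by
    rw [abs_mul, abs_of_pos two_pi_pos]
    nlinarith [pi_pos]
  calc sin (π * L) = cos (π / 2 - π * L) := (cos_pi_div_two_sub _).symm
    _ ≤ cos |2 * π * (m - k / 2)| :=
      cos_le_cos_of_nonneg_of_le_pi (abs_nonneg _) (by nlinarith [pi_pos]) hu
    _ ≤ |cos (2 * π * (m - k / 2))| := (cos_abs _).trans_le (le_abs_self _)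
    _ = |cos (2 * π * m)| := by
      rw [hshift, cos_add_int_mul_pi, abs_mul, abs_zpow, abs_neg, abs_one, one_zpow, one_mul]

lemma exists_mem_Icc_two_mul_sin_sq_le_abs_sub (t : ℝ) {δ : ℝ} (h₀ : 0 ≤ δ) (h₁ : δ ≤ 1) :
    ∃ a ∈ Icc t (t + δ), ∃ b ∈ Icc t (t + δ),
      2 * sin (π * δ / 2) ^ 2 ≤ |sin (2 * π * b) - sin (2 * π * a)| := by
  obtain ⟨m, ⟨hm₀, hm₁⟩, k, hk⟩ :=
    exists_mem_Icc_abs_sub_half_int_le (t + δ / 4) (L := δ / 2) (by linarith) (by linarith)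
  refine ⟨m - δ / 4, ⟨by linarith, by linarith⟩, m + δ / 4, ⟨by linarith, by linarith⟩, ?_⟩
  have hdiff : sin (2 * π * (m + δ / 4)) - sin (2 * π * (m - δ / 4)) =
      2 * sin (π * δ / 2) * cos (2 * π * m) := by
    rw [sin_sub_sin]; ring_nf
  have hsin : 0 ≤ sin (π * δ / 2) :=
    sin_nonneg_of_nonneg_of_le_pi (by positivity) (by nlinarith [pi_pos])
  have hcos : sin (π * δ / 2) ≤ |cos (2 * π * m)| := by
    simpa only [mul_div_assoc] using sin_pi_mul_le_abs_cos_two_pi_mul (by linarith) hk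
  rw [hdiff, abs_mul, abs_of_nonneg (by positivity)]
  nlinarith

/-- For `0 < δ < 1/2`, the minimal variation of `s(x) = sin(2πx)` over intervals of length `δ`
is at least `πδ²`: on every interval `[t, t+δ]` the oscillation of `s` is at least `πδ²`. -/
theorem stmt13 (δ : ℝ) (h0 : 0 < δ) (h1 : δ < 1/2) (t : ℝ) :
    Real.pi * δ ^ 2 ≤
      sSup ((fun x => Real.sin (2 * Real.pi * x)) '' Set.Icc t (t + δ)) -
        sInf ((fun x => Real.sin (2 * Real.pi * x)) '' Set.Icc t (t + δ)) := by
  obtain ⟨a, ha, b, hb, hab⟩ := exists_mem_Icc_two_mul_sin_sq_le_abs_sub t h0.le (by linarith)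
  have hbdd : Bornology.IsBounded ((fun x => sin (2 * π * x)) '' Icc t (t + δ)) :=
    (isCompact_Icc.image (by fun_prop)).isBounded
  calc π * δ ^ 2 ≤ 2 * sin (π * δ / 2) ^ 2 := pi_mul_sq_le_two_mul_sin_sq h0.le h1.le
    _ ≤ |sin (2 * π * b) - sin (2 * π * a)| := hab
    _ ≤ _ := abs_sub_le_csSup_sub_csInf hbdd (mem_image_of_mem _ hb) (mem_image_of_mem _ ha)
end

section
/- Let φ, ψ : ℝ → ℝ be continuous and 1-periodic with min ψ ≤ 0 < max ψ = β, and suppose there exists δ ≤ β/2 such that every interval of length δ contains points where φ varies by at least 2 (i.e. Var_φ(δ) ≥ 2). Set F = H_φ ∘ V_ψ with H_φ(x,y)=(x+φ(y),y), V_ψ(x,y)=(x,y+ψ(x)). Then for every n ≥ 1 there is a point z on the segment [0,1]×{0} with π₂(F^n(z)) ≥ n(β-δ). -/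
open Set

lemma pinned_ordered (v : ℝ → ℝ) (hv : Continuous v) (lo hi : ℝ) (hlohi : lo < hi)
    (p q : ℝ) (hpq : p ≤ q) (hp : v p ≤ lo) (hq : hi ≤ v q) :
    ∃ p' q', p ≤ p' ∧ p' ≤ q' ∧ q' ≤ q ∧ v p' = lo ∧ v q' = hi ∧
      ∀ x ∈ Set.Icc p' q', v x ∈ Set.Icc lo hi := by
  set S : Set ℝ := Icc p q ∩ {x | hi ≤ v x} with hS
  have hSclosed : IsClosed S := isClosed_Icc.inter (isClosed_le continuous_const hv)
  have hSne : S.Nonempty := ⟨q, ⟨hpq, le_rfl⟩, hq⟩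
  have hSbdd : BddBelow S := ⟨p, fun x hx => hx.1.1⟩
  set q' := sInf S with hq'
  have hq'S : q' ∈ S := hSclosed.csInf_mem hSne hSbdd
  have hq'mem : q' ∈ Icc p q := hq'S.1
  have hlt : ∀ x ∈ Ico p q', v x < hi := by
    intro x hx
    by_contra h
    push_neg at h
    have : x ∈ S := ⟨⟨hx.1, hx.2.le.trans hq'mem.2⟩, h⟩
    exact absurd (csInf_le hSbdd this) (not_le.mpr hx.2)
  have hpq' : p < q' := by
    rcases eq_or_lt_of_le hq'mem.1 with h | h
    · exfalso; have := hq'S.2; simp only [S, mem_inter_iff, mem_setOf_eq] at this; rw [← h] at this; linarith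
    · exact h
  have hvq'le : v q' ≤ hi := by
    have htd : Filter.Tendsto v (nhdsWithin q' (Iio q')) (nhds (v q')) :=
      (hv.tendsto q').mono_left nhdsWithin_le_nhds
    refine le_of_tendsto htd ?_
    filter_upwards [Ioo_mem_nhdsLT_of_mem ⟨hpq', le_rfl⟩] with x hx
    exact (hlt x ⟨hx.1.le, hx.2⟩).le
  have hvq' : v q' = hi := le_antisymm hvq'le hq'S.2
  set T : Set ℝ := Icc p q' ∩ {x | v x ≤ lo} with hT
  have hTclosed : IsClosed T := isClosed_Icc.inter (isClosed_le hv continuous_const)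
  have hTne : T.Nonempty := ⟨p, ⟨le_rfl, hpq'.le⟩, hp⟩
  have hTbdd : BddAbove T := ⟨q', fun x hx => hx.1.2⟩
  set p' := sSup T with hp'
  have hp'T : p' ∈ T := hTclosed.csSup_mem hTne hTbdd
  have hp'mem : p' ∈ Icc p q' := hp'T.1
  have hgt : ∀ x ∈ Ioc p' q', lo < v x := by
    intro x hx
    by_contra h
    push_neg at h
    have : x ∈ T := ⟨⟨hp'mem.1.trans hx.1.le, hx.2⟩, h⟩
    exact absurd (le_csSup hTbdd this) (not_le.mpr hx.1)
  have hp'q' : p' < q' := by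
    rcases eq_or_lt_of_le hp'mem.2 with h | h
    · exfalso; have h2 : v p' ≤ lo := hp'T.2; rw [h, hvq'] at h2; linarith
    · exact h
  have hvp'ge : lo ≤ v p' := by
    have htd : Filter.Tendsto v (nhdsWithin p' (Ioi p')) (nhds (v p')) :=
      (hv.tendsto p').mono_left nhdsWithin_le_nhds
    refine ge_of_tendsto htd ?_
    filter_upwards [Ioo_mem_nhdsGT_of_mem ⟨le_rfl, hp'q'⟩] with x hx
    exact (hgt x ⟨hx.1, hx.2.le⟩).le
  have hvp' : v p' = lo := le_antisymm hp'T.2 hvp'ge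
  refine ⟨p', q', hp'mem.1, hp'q'.le, hq'mem.2, hvp', hvq', ?_⟩
  intro x hx
  constructor
  · rcases eq_or_lt_of_le hx.1 with h | h
    · rw [← h, hvp']
    · exact (hgt x ⟨h, hx.2⟩).le
  · rcases eq_or_lt_of_le hx.2 with h | h
    · rw [h, hvq']
    · exact (hlt x ⟨hp'mem.1.trans hx.1, h⟩).le

lemma pinned (v : ℝ → ℝ) (hv : Continuous v) (lo hi : ℝ) (hlohi : lo < hi)
    (p q : ℝ) (hp : v p ≤ lo) (hq : hi ≤ v q) :
    ∃ p' q', Set.uIcc p' q' ⊆ Set.uIcc p q ∧ v p' = lo ∧ v q' = hi ∧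
      ∀ x ∈ Set.uIcc p' q', v x ∈ Set.Icc lo hi := by
  rcases le_total p q with h | h
  · obtain ⟨p', q', h1, h2, h3, h4, h5, h6⟩ := pinned_ordered v hv lo hi hlohi p q h hp hq
    refine ⟨p', q', ?_, h4, h5, ?_⟩
    · rw [uIcc_of_le h2, uIcc_of_le h]
      exact Icc_subset_Icc h1 h3
    · rw [uIcc_of_le h2]; exact h6
  · obtain ⟨p', q', h1, h2, h3, h4, h5, h6⟩ :=
      pinned_ordered (fun x => v (p + q - x)) (hv.comp (by continuity)) lo hi hlohi q p h
        (by simpa using hp) (by simpa using hq)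
    refine ⟨p + q - p', p + q - q', ?_, by simpa using h4, by simpa using h5, ?_⟩
    · rw [uIcc_of_ge (by linarith : p + q - q' ≤ p + q - p'), uIcc_of_ge h]
      intro x hx
      exact ⟨by linarith [hx.1, h3], by linarith [hx.2, h1]⟩
    · intro x hx
      rw [uIcc_of_ge (by linarith : p + q - q' ≤ p + q - p')] at hx
      have := h6 (p + q - x) ⟨by linarith [hx.2], by linarith [hx.1]⟩
      simpa using this



/-- Vertical diffusion for generalized kicked maps `F = H_φ ∘ V_ψ`: if `φ, ψ` are continuous,
1-periodic, `min ψ ≤ 0 < max ψ = β`, and every interval of length `δ ≤ β/2` carries a variation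
of `φ` at least `2`, then for each `n ≥ 1` some point of the segment `[0,1] × {0}` is moved by
`Fⁿ` at vertical height at least `n(β - δ)`. -/
theorem stmt14 (φ ψ : ℝ → ℝ) (hφc : Continuous φ) (hψc : Continuous ψ)
    (hφp : Function.Periodic φ 1) (hψp : Function.Periodic ψ 1)
    (β : ℝ) (hmin : ∃ x, ψ x ≤ 0) (hmax : ∀ x, ψ x ≤ β) (hmax' : ∃ x, ψ x = β) (hβ : 0 < β)
    (δ : ℝ) (hδ : δ ≤ β / 2)
    (hvar : ∀ t : ℝ, ∃ y₀ ∈ Set.Icc t (t + δ), ∃ y₁ ∈ Set.Icc t (t + δ), φ y₁ - φ y₀ ≥ 2)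
    (F : ℝ × ℝ → ℝ × ℝ)
    (hF : ∀ z : ℝ × ℝ, F z = (z.1 + φ (z.2 + ψ z.1), z.2 + ψ z.1)) :
    ∀ n : ℕ, 1 ≤ n → ∃ x ∈ Set.Icc (0:ℝ) 1,
      (F^[n] (x, (0:ℝ))).2 ≥ n * (β - δ) := by
  -- δ is positive
  have hδ0 : 0 < δ := by
    by_contra h
    push_neg at h
    obtain ⟨y₀, hy₀, y₁, hy₁, hvar2⟩ := hvar 0
    have h0 : y₀ = 0 := le_antisymm (by linarith [hy₀.2]) hy₀.1
    have h1 : y₁ = 0 := le_antisymm (by linarith [hy₁.2]) hy₁.1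
    rw [h0, h1] at hvar2
    linarith
  have hβδ : δ ≤ β - δ := by linarith
  -- continuity
  have hFc : Continuous F := by
    have hFe : F = fun z : ℝ × ℝ => (z.1 + φ (z.2 + ψ z.1), z.2 + ψ z.1) := funext hF
    rw [hFe]; fun_prop
  have hGc : ∀ n : ℕ, Continuous fun x : ℝ => F^[n] (x, (0:ℝ)) :=
    fun n => (hFc.iterate n).comp (continuous_id.prodMk continuous_const)
  -- periodic hitting lemmas
  obtain ⟨x₀, hx₀⟩ := hmax'
  obtain ⟨xm, hxm⟩ := hmin
  have hψβ : ∀ c : ℝ, ∃ t ∈ Set.Icc c (c + 1), ψ t = β := by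
    intro c
    refine ⟨x₀ + (⌈c - x₀⌉ : ℤ), ⟨by linarith [Int.le_ceil (c - x₀)],
      by linarith [Int.ceil_lt_add_one (c - x₀)]⟩, ?_⟩
    have := (hψp.int_mul ⌈c - x₀⌉) x₀
    simpa [hx₀] using this
  have hψ0 : ∀ c : ℝ, ∃ t ∈ Set.Icc c (c + 1), ψ t ≤ 0 := by
    intro c
    refine ⟨xm + (⌈c - xm⌉ : ℤ), ⟨by linarith [Int.le_ceil (c - xm)],
      by linarith [Int.ceil_lt_add_one (c - xm)]⟩, ?_⟩
    have := (hψp.int_mul ⌈c - xm⌉) xm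
    simp only [mul_one] at this
    rw [this]; exact hxm
  -- the inductive invariant
  suffices Inv : ∀ n : ℕ, ∃ a b : ℝ,
      Set.uIcc a b ⊆ Set.Icc (0:ℝ) 1 ∧
      (∀ x ∈ Set.uIcc a b,
        (F^[n] (x, (0:ℝ))).2 ∈ Set.Icc ((n:ℝ) * (β - δ)) ((n:ℝ) * (β - δ) + δ)) ∧
      (F^[n] (b, (0:ℝ))).1 - (F^[n] (a, (0:ℝ))).1 = 1 ∧
      (∀ x ∈ Set.uIcc a b,
        (F^[n] (a, (0:ℝ))).1 ≤ (F^[n] (x, (0:ℝ))).1 ∧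
        (F^[n] (x, (0:ℝ))).1 ≤ (F^[n] (b, (0:ℝ))).1) by
    intro n _
    obtain ⟨a, b, hsub, hy, -, -⟩ := Inv n
    exact ⟨a, hsub Set.left_mem_uIcc, (hy a Set.left_mem_uIcc).1⟩
  intro n
  induction n with
  | zero =>
    refine ⟨0, 1, ?_, ?_, by simp, ?_⟩
    · rw [Set.uIcc_of_le (by norm_num : (0:ℝ) ≤ 1)]
    · intro x _
      simp only [Function.iterate_zero, id_eq, Nat.cast_zero, zero_mul, zero_add]
      exact ⟨le_rfl, hδ0.le⟩
    · intro x hx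
      rw [Set.uIcc_of_le (by norm_num : (0:ℝ) ≤ 1)] at hx
      simpa using hx
  | succ n ih =>
    obtain ⟨a, b, hsub, hy, hdiff, hmono⟩ := ih
    set G : ℝ → ℝ × ℝ := fun x => F^[n] (x, (0:ℝ)) with hGdef
    have hvc : Continuous fun x => (G x).1 := (hGc n).fst
    have hsucc : ∀ x : ℝ, F^[n + 1] (x, (0:ℝ)) =
        ((G x).1 + φ ((G x).2 + ψ (G x).1), (G x).2 + ψ (G x).1) := by
      intro x
      rw [Function.iterate_succ_apply', hF (G x)]
    set u : ℝ → ℝ := fun x => (G x).2 + ψ (G x).1 with hudef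
    have huc : Continuous u := (hGc n).snd.add (hψc.comp hvc)
    have hu2 : ∀ x : ℝ, (F^[n + 1] (x, (0:ℝ))).2 = u x := fun x => by rw [hsucc x]
    have hu1 : ∀ x : ℝ, (F^[n + 1] (x, (0:ℝ))).1 = (G x).1 + φ (u x) := fun x => by
      rw [hsucc x]
    have hvb : (G b).1 = (G a).1 + 1 := by linarith [hdiff]
    -- the image of the first coordinate contains an interval of length 1
    have himage : Set.Icc ((G a).1) ((G a).1 + 1) ⊆ (fun x => (G x).1) '' Set.uIcc a b := by
      have h1 : Set.Icc ((G a).1) ((G a).1 + 1) = Set.uIcc ((G a).1) ((G b).1) := by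
        rw [hvb, Set.uIcc_of_le (by linarith)]
      rw [h1]
      exact intermediate_value_uIcc hvc.continuousOn
    obtain ⟨t₁, ht₁, hψt₁⟩ := hψβ ((G a).1)
    obtain ⟨x₁, hx₁mem, hx₁⟩ := himage ht₁
    obtain ⟨t₂, ht₂, hψt₂⟩ := hψ0 ((G a).1)
    obtain ⟨x₂, hx₂mem, hx₂⟩ := himage ht₂
    simp only at hx₁ hx₂
    have hux₁ : ((n:ℝ) + 1) * (β - δ) + δ ≤ u x₁ := by
      have h2 := (hy x₁ hx₁mem).1
      have h3 : ψ (G x₁).1 = β := by rw [hx₁]; exact hψt₁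
      simp only [hudef]
      rw [h3]
      nlinarith
    have hux₂ : u x₂ ≤ ((n:ℝ) + 1) * (β - δ) := by
      have h2 := (hy x₂ hx₂mem).2
      have h3 : ψ (G x₂).1 ≤ 0 := by rw [hx₂]; exact hψt₂
      simp only [hudef]
      nlinarith
    -- pin u between (n+1)(β-δ) and (n+1)(β-δ)+δ
    obtain ⟨a', b', hsub', hua', hub', hubnd⟩ :=
      pinned u huc (((n:ℝ) + 1) * (β - δ)) (((n:ℝ) + 1) * (β - δ) + δ) (by linarith)
        x₂ x₁ hux₂ hux₁
    have hsub'' : Set.uIcc a' b' ⊆ Set.uIcc a b :=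
      hsub'.trans (Set.uIcc_subset_uIcc hx₂mem hx₁mem)
    -- u attains every value in [(n+1)(β-δ), (n+1)(β-δ)+δ]
    have huimage : Set.Icc (((n:ℝ) + 1) * (β - δ)) (((n:ℝ) + 1) * (β - δ) + δ) ⊆
        u '' Set.uIcc a' b' := by
      have h1 : Set.Icc (((n:ℝ) + 1) * (β - δ)) (((n:ℝ) + 1) * (β - δ) + δ) =
          Set.uIcc (u a') (u b') := by
        rw [hua', hub', Set.uIcc_of_le (by linarith)]
      rw [h1]
      exact intermediate_value_uIcc huc.continuousOn
    obtain ⟨y₀, hy₀, y₁, hy₁, hvar2⟩ := hvar (((n:ℝ) + 1) * (β - δ))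
    obtain ⟨p, hpmem, hup⟩ := huimage hy₀
    obtain ⟨q, hqmem, huq⟩ := huimage hy₁
    -- the new first coordinate gains at least 1 from p to q
    have hnew : ∀ x : ℝ, (F^[n + 1] (x, (0:ℝ))).1 = (G x).1 + φ (u x) := hu1
    have hgain : (F^[n + 1] (q, (0:ℝ))).1 - (F^[n + 1] (p, (0:ℝ))).1 ≥ 1 := by
      rw [hnew q, hnew p, hup, huq]
      have hpb := hmono p (hsub'' hpmem)
      have hqb := hmono q (hsub'' hqmem)
      have := hdiff
      linarith
    -- pin the new first coordinate
    obtain ⟨A, B, hsubAB, hA, hB, hABbnd⟩ :=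
      pinned (fun x => (F^[n + 1] (x, (0:ℝ))).1)
        (continuous_fst.comp ((hFc.iterate (n + 1)).comp
          (continuous_id.prodMk continuous_const)))
        ((F^[n + 1] (p, (0:ℝ))).1) ((F^[n + 1] (p, (0:ℝ))).1 + 1) (by linarith)
        p q le_rfl (by linarith)
    have hsubABfull : Set.uIcc A B ⊆ Set.uIcc a' b' :=
      hsubAB.trans (Set.uIcc_subset_uIcc hpmem hqmem)
    refine ⟨A, B, ?_, ?_, ?_, ?_⟩
    · exact (hsubABfull.trans hsub'').trans hsub
    · intro x hx
      have := hubnd x (hsubABfull hx)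
      rw [hu2 x]
      push_cast
      exact this
    · rw [hA, hB]; ring
    · intro x hx
      have := hABbnd x hx
      rw [hA, hB]
      exact this
end
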